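/- arXiv:2211.17192 — 8 statements merged into one kernel-verified Lean document; each statement's English description precedes it below -/
import Mathlib

section
/- Let α be a finite type and let p, q : α → ℝ be probability mass functions on α. Then the acceptance probability of speculative sampling satisfies β := ∑_{x : q(x) > 0} q(x) · min(1, p(x)/q(x)) = ∑_x min(p(x), q(x)) = 1 − D_LK(p, q). -/
/-!
On `{q > 0}` the summand `q · min 1 (p / q)` equals `min p q`, and off it `min p q = 0`, so the
acceptance rate is the overlap `∑ min p q`. Pointwise `min p q = M - |p - M|` with `M = (p + q) / 2`,
and `∑ M = 1` because both `p` and `q` have mass one.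
-/

open Finset

section

variable {K : Type*} [Field K] [LinearOrder K] [IsStrictOrderedRing K]

lemma mul_min_one_div_of_pos {a b : K} (hb : 0 < b) : b * min 1 (a / b) = min a b := by
  rw [mul_min_of_nonneg _ _ hb.le, mul_one, mul_div_cancel₀ _ hb.ne', min_comm]

lemma min_eq_midpoint_sub_abs_sub_midpoint (a b : K) :
    min a b = (a + b) / 2 - |a - (a + b) / 2| := by
  have h : |a - (a + b) / 2| = |a - b| / 2 := by
    rw [show a - (a + b) / 2 = (a - b) / 2 by ring, abs_div, abs_two]
  rw [h, ← max_sub_min_eq_abs']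
  linarith [min_add_max a b]

variable {ι : Type*}

theorem sum_filter_pos_mul_min_one_div (s : Finset ι) (p q : ι → K)
    (hp : ∀ x ∈ s, 0 ≤ p x) (hq : ∀ x ∈ s, 0 ≤ q x) :
    ∑ x ∈ s with 0 < q x, q x * min 1 (p x / q x) = ∑ x ∈ s, min (p x) (q x) := by
  calc ∑ x ∈ s with 0 < q x, q x * min 1 (p x / q x)
      = ∑ x ∈ s with 0 < q x, min (p x) (q x) :=
        sum_congr rfl fun x hx => mul_min_one_div_of_pos (mem_filter.mp hx).2
    _ = ∑ x ∈ s, min (p x) (q x) := by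
        refine sum_filter_of_ne fun x hx hmin => (hq x hx).lt_of_ne fun hq0 => hmin ?_
        rw [← hq0, min_eq_right (hp x hx)]

theorem sum_min_eq_one_sub_sum_abs_sub_midpoint [Fintype ι] (p q : ι → K)
    (hp1 : ∑ x, p x = 1) (hq1 : ∑ x, q x = 1) :
    ∑ x, min (p x) (q x) = 1 - ∑ x, |p x - (p x + q x) / 2| := by
  have hM : ∑ x, (p x + q x) / 2 = 1 := by
    rw [← sum_div, sum_add_distrib, hp1, hq1]
    norm_num
  simp only [min_eq_midpoint_sub_abs_sub_midpoint, sum_sub_distrib, hM]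

end

theorem acceptance_rate_eq_one_sub_dlk {α : Type*} [Fintype α] (p q : α → ℝ)
    (hp : ∀ x, 0 ≤ p x) (hp1 : ∑ x, p x = 1)
    (hq : ∀ x, 0 ≤ q x) (hq1 : ∑ x, q x = 1) :
    ∑ x ∈ Finset.univ.filter (fun x => 0 < q x), q x * min 1 (p x / q x)
      = ∑ x, min (p x) (q x) ∧
    ∑ x, min (p x) (q x) = 1 - ∑ x, |p x - (p x + q x) / 2| :=
  ⟨sum_filter_pos_mul_min_one_div _ p q (fun x _ => hp x) (fun x _ => hq x),
    sum_min_eq_one_sub_sum_abs_sub_midpoint p q hp1 hq1⟩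
end

section
/- Correctness of speculative sampling: let α be a finite type and let p, q : α → ℝ be probability mass functions on α with β := ∑_x min(p(x), q(x)) < 1, and let p'(x) := max(0, p(x) − q(x)) / (1 − β). Then for every x' in α, A(x') + R · p'(x') = p(x'), where A(x') = q(x') · min(1, p(x')/q(x')) if q(x') > 0 and A(x') = 0 otherwise, and R = ∑_{x : q(x) > 0} q(x) · (1 − min(1, p(x)/q(x))). That is, the distribution of the output of speculative sampling (sample x ~ q, accept with probability min(1, p(x)/q(x)), otherwise resample from p') is exactly p. -/
/-! The output of speculative sampling is `x'` either because `x'` was drawn from `q` and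
accepted, with probability `min (p x') (q x')`, or because a draw was rejected, with total
probability `∑ (q x - min (p x) (q x)) = 1 - β`, and `x'` was then drawn from `p'`. The
factor `1 - β` cancels the normalisation of `p'`, leaving `min a b + max 0 (a - b) = a`
with `a = p x'`, `b = q x'`. -/

open Finset

section LinearOrderedField

variable {K : Type*} [Field K] [LinearOrder K] [IsStrictOrderedRing K]

lemma min_add_max_zero_sub (a b : K) : min a b + max 0 (a - b) = a := by
  rcases le_total a b with h | h
  · rw [min_eq_left h, max_eq_left (sub_nonpos.mpr h)]; ring
  · rw [min_eq_right h, max_eq_right (sub_nonneg.mpr h)]; ring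

lemma mul_min_one_div {p q : K} (hq : 0 < q) : q * min 1 (p / q) = min p q := by
  rw [mul_min_of_nonneg _ _ hq.le, mul_one, mul_div_cancel₀ _ hq.ne', min_comm]

lemma ite_pos_mul_min_one_div {p q : K} (hp : 0 ≤ p) (hq : 0 ≤ q) :
    (if 0 < q then q * min 1 (p / q) else 0) = min p q := by
  split_ifs with h
  · exact mul_min_one_div h
  · rw [le_antisymm (not_lt.mp h) hq, min_eq_right hp]

lemma sum_filter_pos_mul_one_sub_min_one_div {ι : Type*} (s : Finset ι) {p q : ι → K}
    (hp : ∀ x, 0 ≤ p x) (hq : ∀ x, 0 ≤ q x) :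
    ∑ x ∈ s.filter (fun x => 0 < q x), q x * (1 - min 1 (p x / q x))
      = ∑ x ∈ s, q x - ∑ x ∈ s, min (p x) (q x) := by
  rw [← sum_sub_distrib, sum_filter]
  refine sum_congr rfl fun x _ => ?_
  split_ifs with h
  · rw [mul_sub, mul_one, mul_min_one_div h]
  · rw [le_antisymm (not_lt.mp h) (hq x), min_eq_right (hp x), sub_zero]

end LinearOrderedField

theorem speculative_sampling_correct_general {α : Type*} [Fintype α] (p q : α → ℝ)
    (hp : ∀ x, 0 ≤ p x)
    (hq : ∀ x, 0 ≤ q x) (hq1 : ∑ x, q x = 1)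
    (hβ : ∑ x, min (p x) (q x) < 1) :
    ∀ x' : α,
      (if 0 < q x' then q x' * min 1 (p x' / q x') else 0) +
      (∑ x ∈ Finset.univ.filter (fun x => 0 < q x), q x * (1 - min 1 (p x / q x))) *
        (max 0 (p x' - q x') / (1 - ∑ x, min (p x) (q x)))
      = p x' := by
  intro x'
  rw [ite_pos_mul_min_one_div (hp x') (hq x'), sum_filter_pos_mul_one_sub_min_one_div _ hp hq,
    hq1, mul_div_cancel₀ _ (sub_ne_zero_of_ne hβ.ne'), min_add_max_zero_sub]

theorem speculative_sampling_correct {α : Type*} [Fintype α] (p q : α → ℝ)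
    (hp : ∀ x, 0 ≤ p x) (hp1 : ∑ x, p x = 1)
    (hq : ∀ x, 0 ≤ q x) (hq1 : ∑ x, q x = 1)
    (hβ : ∑ x, min (p x) (q x) < 1) :
    ∀ x' : α,
      (if 0 < q x' then q x' * min 1 (p x' / q x') else 0) +
      (∑ x ∈ Finset.univ.filter (fun x => 0 < q x), q x * (1 - min 1 (p x / q x))) *
        (max 0 (p x' - q x') / (1 - ∑ x, min (p x) (q x)))
      = p x' :=
  speculative_sampling_correct_general p q hp hq hq1 hβ
end

section
/- Let 0 ≤ a < 1 and let γ be a positive natural number. Let N be the capped geometric random variable on {1, …, γ+1} with P(N = k) = a^{k−1}(1 − a) for 1 ≤ k ≤ γ and P(N = γ+1) = a^γ. Then these probabilities are nonnegative and sum to 1, and the expectation satisfies E[N] = ∑_{k=1}^{γ} k · a^{k−1}(1 − a) + (γ+1) · a^γ = (1 − a^{γ+1}) / (1 − a). -/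
/-!
Both identities are telescoping in `γ`: raising the cap from `n` to `n + 1` splits the mass `a ^ n`
of the top atom into `a ^ n * (1 - a)` at `n + 1` and `a ^ (n + 1)` at `n + 2`, which raises the
mean by exactly `a ^ (n + 1)`. Hence the mean is the geometric sum `∑_{j=0}^{γ} a ^ j`, i.e. the
tail-sum formula `E[N] = ∑_j P(N > j)` with `P(N > j) = a ^ j`.
-/

open Finset

section CommRing

variable {R : Type*} [CommRing R]

theorem capped_geometric_mass_sum (a : R) (n : ℕ) :
    ∑ k ∈ Icc 1 n, a ^ (k - 1) * (1 - a) = 1 - a ^ n := by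
  induction n with
  | zero => simp
  | succ n ih =>
    rw [sum_Icc_succ_top (Nat.le_add_left 1 n), ih, Nat.add_sub_cancel, pow_succ]
    ring

theorem capped_geometric_mean_eq_geom_sum (a : R) (n : ℕ) :
    ∑ k ∈ Icc 1 n, (k : R) * (a ^ (k - 1) * (1 - a)) + (n + 1 : R) * a ^ n
      = ∑ i ∈ range (n + 1), a ^ i := by
  induction n with
  | zero => simp
  | succ n ih =>
    rw [sum_Icc_succ_top (Nat.le_add_left 1 n), Nat.add_sub_cancel, sum_range_succ, ← ih]
    push_cast
    ring

end CommRing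

theorem capped_geometric_expectation_general (a : ℝ) (ha0 : 0 ≤ a) (ha1 : a < 1)
    (γ : ℕ) :
    (∀ k ∈ Finset.Icc 1 γ, 0 ≤ a ^ (k - 1) * (1 - a)) ∧
    0 ≤ a ^ γ ∧
    (∑ k ∈ Finset.Icc 1 γ, a ^ (k - 1) * (1 - a)) + a ^ γ = 1 ∧
    (∑ k ∈ Finset.Icc 1 γ, (k : ℝ) * (a ^ (k - 1) * (1 - a))) + (γ + 1 : ℝ) * a ^ γ
      = (1 - a ^ (γ + 1)) / (1 - a) := by
  have h1a : 0 < 1 - a := sub_pos.mpr ha1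
  refine ⟨fun k _ => mul_nonneg (pow_nonneg ha0 _) h1a.le, pow_nonneg ha0 _, ?_, ?_⟩
  · rw [capped_geometric_mass_sum, sub_add_cancel]
  · rw [capped_geometric_mean_eq_geom_sum, eq_div_iff h1a.ne', mul_comm, mul_neg_geom_sum]

theorem capped_geometric_expectation (a : ℝ) (ha0 : 0 ≤ a) (ha1 : a < 1)
    (γ : ℕ) (hγ : 0 < γ) :
    (∀ k ∈ Finset.Icc 1 γ, 0 ≤ a ^ (k - 1) * (1 - a)) ∧
    0 ≤ a ^ γ ∧
    (∑ k ∈ Finset.Icc 1 γ, a ^ (k - 1) * (1 - a)) + a ^ γ = 1 ∧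
    (∑ k ∈ Finset.Icc 1 γ, (k : ℝ) * (a ^ (k - 1) * (1 - a))) + (γ + 1 : ℝ) * a ^ γ
      = (1 - a ^ (γ + 1)) / (1 - a) :=
  capped_geometric_expectation_general a ha0 ha1 γ
end

section
/- Let 0 ≤ a < 1, let γ be a positive natural number, let c ≥ 0, and let T > 0. If each iteration of speculative decoding costs T·c·γ + T and produces on average (1 − a^{γ+1})/(1 − a) tokens, then the expected cost per token is (c·γ + 1)(1 − a)·T / (1 − a^{γ+1}), and hence the improvement factor over a baseline cost of T per token is T divided by this quantity, namely (1 − a^{γ+1}) / ((1 − a)(γ·c + 1)). -/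
theorem speculative_walltime_improvement_general (a : ℝ)
    (γ : ℕ) (c : ℝ) (T : ℝ) (hT : 0 < T) :
    (T * c * γ + T) / ((1 - a ^ (γ + 1)) / (1 - a))
      = (c * γ + 1) * (1 - a) * T / (1 - a ^ (γ + 1)) ∧
    T / ((c * γ + 1) * (1 - a) * T / (1 - a ^ (γ + 1)))
      = (1 - a ^ (γ + 1)) / ((1 - a) * (γ * c + 1)) := by
  constructor
  · rw [div_div_eq_mul_div]
    ring
  · rw [div_div_eq_mul_div, mul_comm T, mul_div_mul_right _ _ hT.ne']
    ring

theorem speculative_walltime_improvement (a : ℝ) (ha0 : 0 ≤ a) (ha1 : a < 1)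
    (γ : ℕ) (hγ : 0 < γ) (c : ℝ) (hc : 0 ≤ c) (T : ℝ) (hT : 0 < T) :
    (T * c * γ + T) / ((1 - a ^ (γ + 1)) / (1 - a))
      = (c * γ + 1) * (1 - a) * T / (1 - a ^ (γ + 1)) ∧
    T / ((c * γ + 1) * (1 - a) * T / (1 - a ^ (γ + 1)))
      = (1 - a ^ (γ + 1)) / ((1 - a) * (γ * c + 1)) :=
  speculative_walltime_improvement_general a γ c T hT
end

section
/- Let 0 ≤ c < a < 1. Then the speculative decoding walltime improvement factor for γ = 1 satisfies (1 − a²) / ((1 − a)(c + 1)) = (1 + a)/(1 + c), and (1 + a)/(1 + c) > 1. In particular, if the expected acceptance rate a = α exceeds the cost coefficient c, there exists a positive integer γ for which speculative decoding yields a walltime improvement factor of at least (1 + α)/(1 + c) > 1. -/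
noncomputable def speculativeImprovement (a c : ℝ) (γ : ℕ) : ℝ :=
  (1 - a ^ (γ + 1)) / ((1 - a) * (γ * c + 1))

theorem speculativeImprovement_one {a : ℝ} (ha : a ≠ 1) (c : ℝ) :
    speculativeImprovement a c 1 = (1 + a) / (1 + c) := by
  have hsub : 1 - a ≠ 0 := sub_ne_zero.mpr ha.symm
  calc speculativeImprovement a c 1 = (1 - a) * (1 + a) / ((1 - a) * (1 + c)) := by
        unfold speculativeImprovement; push_cast; ring_nf
    _ = (1 + a) / (1 + c) := mul_div_mul_left _ _ hsub

theorem one_lt_one_add_div_one_add {a c : ℝ} (hc : -1 < c) (hca : c < a) :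
    1 < (1 + a) / (1 + c) :=
  (one_lt_div (by linarith)).mpr (by linarith)

theorem improvement_exists_of_alpha_gt_c (a c : ℝ) (hc0 : 0 ≤ c) (hca : c < a) (ha1 : a < 1) :
    (1 - a ^ 2) / ((1 - a) * (c + 1)) = (1 + a) / (1 + c) ∧
    1 < (1 + a) / (1 + c) ∧
    ∃ γ : ℕ, 0 < γ ∧
      (1 + a) / (1 + c) ≤ (1 - a ^ (γ + 1)) / ((1 - a) * (γ * c + 1)) := by
  have hγ₁ := speculativeImprovement_one ha1.ne c
  refine ⟨?_, one_lt_one_add_div_one_add (by linarith) hca, 1, one_pos, hγ₁.ge⟩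
  simpa [speculativeImprovement] using hγ₁
end

section
/- Let 0 < a < 1 and c ≥ 0, and let γ* and γ be positive integers with γ* ≤ γ. If the speculative decoding walltime improvement factor satisfies (1 − a^{γ+1}) / ((1 − a)(γ·c + 1)) > 1, then also (1 − a^{γ*+1}) / ((1 − a)(γ*·c + 1)) > 1. That is, if speculative decoding yields an improvement for γ guesses, it yields an improvement for any smaller positive number of guesses. -/
/-!
Since `1 - a ^ (n + 1) = (1 - a) * (1 + a + ⋯ + aⁿ)`, the improvement factor exceeds `1`
exactly when `n * c < a + a² + ⋯ + aⁿ`, i.e. when `c` is below the mean of the first `n`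
terms of the decreasing sequence `a ^ (i + 1)`. Such means decrease with `n`.
-/

open Finset

namespace Antitone

variable {f : ℕ → ℝ}

theorem mul_le_sum_range (hf : Antitone f) (n : ℕ) : n * f n ≤ ∑ i ∈ range n, f i := by
  simpa using card_nsmul_le_sum (range n) f (f n) fun i hi => hf (mem_range.mp hi).le

theorem mul_lt_sum_range_of_succ (hf : Antitone f) {c : ℝ} {n : ℕ} (hn : 0 < n)
    (h : (n + 1 : ℕ) * c < ∑ i ∈ range (n + 1), f i) : n * c < ∑ i ∈ range n, f i := by
  by_contra! hle
  have hn' : (0 : ℝ) < n := Nat.cast_pos.mpr hn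
  -- `f n` is at most the mean of `f 0, …, f (n - 1)`, which is at most `c`.
  have hfn : f n ≤ c := le_of_mul_le_mul_left ((hf.mul_le_sum_range n).trans hle) hn'
  rw [sum_range_succ] at h
  push_cast at h
  linarith

theorem mul_lt_sum_range_of_le (hf : Antitone f) {c : ℝ} {m n : ℕ} (hm : 0 < m) (hmn : m ≤ n)
    (h : n * c < ∑ i ∈ range n, f i) : m * c < ∑ i ∈ range m, f i := by
  induction n, hmn using Nat.le_induction with
  | base => exact h
  | succ n hmn ih => exact ih (hf.mul_lt_sum_range_of_succ (hm.trans_le hmn) h)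

end Antitone

theorem one_lt_speedup_iff {a c : ℝ} (ha : a < 1) (hc : 0 ≤ c) (n : ℕ) :
    1 < (1 - a ^ (n + 1)) / ((1 - a) * (n * c + 1)) ↔ n * c < ∑ i ∈ range n, a ^ (i + 1) := by
  have h1a : 0 < 1 - a := sub_pos.mpr ha
  have hden : 0 < (1 - a) * (n * c + 1) := by positivity
  rw [one_lt_div hden, ← mul_neg_geom_sum, sum_range_succ', mul_lt_mul_iff_right₀ h1a]
  simp

theorem improvement_monotone_down_general (a c : ℝ) (ha0 : 0 < a) (ha1 : a < 1) (hc : 0 ≤ c)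
    (γstar γ : ℕ) (hγstar : 0 < γstar) (hle : γstar ≤ γ)
    (h : 1 < (1 - a ^ (γ + 1)) / ((1 - a) * (γ * c + 1))) :
    1 < (1 - a ^ (γstar + 1)) / ((1 - a) * (γstar * c + 1)) := by
  have hanti : Antitone fun i : ℕ => a ^ (i + 1) := fun i j hij =>
    pow_le_pow_of_le_one ha0.le ha1.le (Nat.succ_le_succ hij)
  rw [one_lt_speedup_iff ha1 hc] at h ⊢
  exact hanti.mul_lt_sum_range_of_le hγstar hle h

theorem improvement_monotone_down (a c : ℝ) (ha0 : 0 < a) (ha1 : a < 1) (hc : 0 ≤ c)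
    (γstar γ : ℕ) (hγstar : 0 < γstar) (hγ : 0 < γ) (hle : γstar ≤ γ)
    (h : 1 < (1 - a ^ (γ + 1)) / ((1 - a) * (γ * c + 1))) :
    1 < (1 - a ^ (γstar + 1)) / ((1 - a) * (γstar * c + 1)) :=
  improvement_monotone_down_general a c ha0 ha1 hc γstar γ hγstar hle h
end

section
/- Let 0 ≤ a < 1, let γ be a positive natural number, and let ĉ ≥ 0. If one iteration of speculative decoding performs T̂·ĉ·γ + T̂·(γ + 1) arithmetic operations (for any T̂ > 0) and produces (1 − a^{γ+1})/(1 − a) tokens in expectation, then the expected factor of increase in the total number of arithmetic operations per token relative to a baseline of T̂ operations per token is (1 − a)(γ·ĉ + γ + 1) / (1 − a^{γ+1}). -/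
theorem mul_div_div_div_cancel_left {K : Type*} [Field K] {t : K} (ht : t ≠ 0) (x n d : K) :
    t * x / (n / d) / t = d * x / n := by
  rw [div_div_eq_mul_div, div_right_comm, mul_assoc, mul_div_cancel_left₀ _ ht, mul_comm]

theorem arithmetic_ops_increase_factor_general (a : ℝ)
    (γ : ℕ) (chat : ℝ) (That : ℝ) (hThat : 0 < That) :
    (That * chat * γ + That * (γ + 1)) / ((1 - a ^ (γ + 1)) / (1 - a)) / That
      = (1 - a) * (γ * chat + γ + 1) / (1 - a ^ (γ + 1)) := by
  have hcost : That * chat * γ + That * (γ + 1) = That * (γ * chat + γ + 1) := by ring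
  rw [hcost, mul_div_div_div_cancel_left hThat.ne']

theorem arithmetic_ops_increase_factor (a : ℝ) (ha0 : 0 ≤ a) (ha1 : a < 1)
    (γ : ℕ) (hγ : 0 < γ) (chat : ℝ) (hchat : 0 ≤ chat) (That : ℝ) (hThat : 0 < That) :
    (That * chat * γ + That * (γ + 1)) / ((1 - a ^ (γ + 1)) / (1 - a)) / That
      = (1 - a) * (γ * chat + γ + 1) / (1 - a ^ (γ + 1)) :=
  arithmetic_ops_increase_factor_general a γ chat That hThat
end

section
/- Rejection sampling is less efficient than speculative sampling: let α be a finite type and let p, q : α → ℝ be probability mass functions on α such that q(x) > 0 whenever p(x) > 0, and suppose p is not identically zero. Let M = max over {x : q(x) > 0} of p(x)/q(x). Then M > 0, the acceptance probability of one step of rejection sampling satisfies ∑_{x : q(x) > 0} q(x) · p(x)/(M · q(x)) = 1/M, and 1/M ≤ ∑_x min(p(x), q(x)). -/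
/-! Since `M` bounds every likelihood ratio and `p` vanishes off the support of `q`, we get
`p ≤ M q` pointwise, and summing gives `1 ≤ M`. Hence `p / M` lies below both `p` and `q`,
so `1 / M = ∑ p / M ≤ ∑ min p q`. -/

open Finset

def likelihoodRatios {α : Type*} (p q : α → ℝ) : Set ℝ :=
  {r | ∃ x, 0 < q x ∧ r = p x / q x}

lemma div_le_min_of_le_mul {a b M : ℝ} (ha : 0 ≤ a) (hM : 1 ≤ M) (hab : a ≤ M * b) :
    a / M ≤ min a b :=
  le_min (div_le_self ha hM) ((div_le_iff₀ (by linarith)).mpr (by linarith))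

section

variable {α : Type*} {p q : α → ℝ} {M : ℝ}

lemma le_mul_of_mem_upperBounds_likelihoodRatios (hq : ∀ x, 0 ≤ q x)
    (hpq : ∀ x, 0 < p x → 0 < q x) (hM : M ∈ upperBounds (likelihoodRatios p q)) (x : α) :
    p x ≤ M * q x := by
  rcases (hq x).lt_or_eq with hqx | hqx
  · exact (div_le_iff₀ hqx).mp (hM ⟨x, hqx, rfl⟩)
  · have hpx : p x ≤ 0 := not_lt.mp fun hpx => (hpq x hpx).ne' hqx.symm
    simpa [← hqx] using hpx

variable [Fintype α]

lemma one_le_of_le_mul (hp1 : ∑ x, p x = 1) (hq1 : ∑ x, q x = 1)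
    (hle : ∀ x, p x ≤ M * q x) : 1 ≤ M :=
  calc 1 = ∑ x, p x := hp1.symm
    _ ≤ ∑ x, M * q x := sum_le_sum fun x _ => hle x
    _ = M := by rw [← mul_sum, hq1, mul_one]

lemma sum_filter_pos_mul_div_mul_eq (hp : ∀ x, 0 ≤ p x) (hp1 : ∑ x, p x = 1)
    (hpq : ∀ x, 0 < p x → 0 < q x) :
    ∑ x ∈ univ.filter (fun x => 0 < q x), q x * (p x / (M * q x)) = 1 / M := by
  have hsupp : ∑ x ∈ univ.filter (fun x => 0 < q x), p x = ∑ x, p x :=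
    sum_filter_of_ne fun x _ hpx => hpq x ((hp x).lt_of_ne' hpx)
  calc ∑ x ∈ univ.filter (fun x => 0 < q x), q x * (p x / (M * q x))
      = ∑ x ∈ univ.filter (fun x => 0 < q x), p x / M := by
        refine sum_congr rfl fun x hx => ?_
        have hqx : q x ≠ 0 := (mem_filter.mp hx).2.ne'
        field_simp
    _ = 1 / M := by rw [← sum_div, hsupp, hp1]

lemma one_div_le_sum_min_of_le_mul (hp : ∀ x, 0 ≤ p x) (hp1 : ∑ x, p x = 1) (hM : 1 ≤ M)
    (hle : ∀ x, p x ≤ M * q x) :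
    1 / M ≤ ∑ x, min (p x) (q x) :=
  calc 1 / M = ∑ x, p x / M := by rw [← sum_div, hp1]
    _ ≤ ∑ x, min (p x) (q x) := sum_le_sum fun x _ => div_le_min_of_le_mul (hp x) hM (hle x)

end

theorem rejection_sampling_less_efficient_general {α : Type*} [Fintype α] (p q : α → ℝ)
    (hp : ∀ x, 0 ≤ p x) (hp1 : ∑ x, p x = 1)
    (hq : ∀ x, 0 ≤ q x) (hq1 : ∑ x, q x = 1)
    (hpq : ∀ x, 0 < p x → 0 < q x)
    (M : ℝ) (hM : IsGreatest {r : ℝ | ∃ x, 0 < q x ∧ r = p x / q x} M) :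
    0 < M ∧
    ∑ x ∈ Finset.univ.filter (fun x => 0 < q x), q x * (p x / (M * q x)) = 1 / M ∧
    1 / M ≤ ∑ x, min (p x) (q x) := by
  have hle : ∀ x, p x ≤ M * q x := le_mul_of_mem_upperBounds_likelihoodRatios hq hpq hM.2
  have hM1 : 1 ≤ M := one_le_of_le_mul hp1 hq1 hle
  exact ⟨by linarith, sum_filter_pos_mul_div_mul_eq hp hp1 hpq,
    one_div_le_sum_min_of_le_mul hp hp1 hM1 hle⟩

theorem rejection_sampling_less_efficient {α : Type*} [Fintype α] (p q : α → ℝ)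
    (hp : ∀ x, 0 ≤ p x) (hp1 : ∑ x, p x = 1)
    (hq : ∀ x, 0 ≤ q x) (hq1 : ∑ x, q x = 1)
    (hpq : ∀ x, 0 < p x → 0 < q x) (hpne : ∃ x, 0 < p x)
    (M : ℝ) (hM : IsGreatest {r : ℝ | ∃ x, 0 < q x ∧ r = p x / q x} M) :
    0 < M ∧
    ∑ x ∈ Finset.univ.filter (fun x => 0 < q x), q x * (p x / (M * q x)) = 1 / M ∧
    1 / M ≤ ∑ x, min (p x) (q x) :=
  rejection_sampling_less_efficient_general p q hp hp1 hq hq1 hpq M hM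
end
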